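/- Let (R, ⊕, ·) be a semihyperring. Then R is fully idempotent if and only if every fuzzy hyperideal λ of R equals the pointwise infimum of the family of all fuzzy prime hyperideals of R that contain λ, i.e. λ(x) = inf{η(x) : η a fuzzy prime hyperideal of R with λ ≤ η} for all x ∈ R. -/

import Mathlib

/-- The unit interval `[0,1]` is a complete lattice. -/
noncomputable instance : Fact ((0:ℝ) ≤ 1) := ⟨zero_le_one⟩

/-- A semihyperring `(R, ⊕, ·)`: a hyperoperation `hadd` (with nonempty values),
a binary multiplication `mul`, and an element `zero`, satisfying commutativity and
(extended) associativity of `⊕`, associativity of `·`, two-sided distributivity of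
`·` over `⊕` (as sets), and `0 ⊕ x = {x}`, `0·x = 0 = x·0`. -/
class Semihyperring (R : Type*) where
  hadd : R → R → Set R
  mul : R → R → R
  zero : R
  hadd_nonempty : ∀ x y : R, (hadd x y).Nonempty
  hadd_comm : ∀ x y : R, hadd x y = hadd y x
  hadd_assoc : ∀ x y z : R, (⋃ w ∈ hadd y z, hadd x w) = ⋃ w ∈ hadd x y, hadd w z
  mul_assoc : ∀ x y z : R, mul (mul x y) z = mul x (mul y z)
  left_distrib : ∀ x y z : R, (fun w => mul x w) '' hadd y z = hadd (mul x y) (mul x z)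
  right_distrib : ∀ x y z : R, (fun w => mul w z) '' hadd x y = hadd (mul x z) (mul y z)
  zero_hadd : ∀ x : R, hadd zero x = {x}
  hadd_zero : ∀ x : R, hadd x zero = {x}
  zero_mul : ∀ x : R, mul zero x = zero
  mul_zero : ∀ x : R, mul x zero = zero

namespace Semihyperring

variable {R : Type*} [Semihyperring R]

/-- The hyperoperation `⊕` extended to subsets: `A ⊕ B = ⋃ {a ⊕ b : a ∈ A, b ∈ B}`. -/
def haddSet (A B : Set R) : Set R := ⋃ a ∈ A, ⋃ b ∈ B, hadd a b

/-- The hypersum `x₁ ⊕ x₂ ⊕ ⋯ ⊕ xₚ` of a list of elements (the empty hypersum is `{0}`,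
which is neutral since `0 ⊕ x = {x}`). -/
def hsumList : List R → Set R
  | [] => {zero}
  | x :: xs => haddSet {x} (hsumList xs)

/-- A (two-sided) hyperideal: a nonempty subset closed under `⊕` and under
multiplication by arbitrary elements of `R` on both sides. -/
def IsHyperideal (I : Set R) : Prop :=
  I.Nonempty ∧ (∀ x ∈ I, ∀ y ∈ I, hadd x y ⊆ I) ∧
    (∀ r : R, ∀ x ∈ I, mul r x ∈ I ∧ mul x r ∈ I)

/-- A right hyperideal. -/
def IsRightHyperideal (I : Set R) : Prop :=
  I.Nonempty ∧ (∀ x ∈ I, ∀ y ∈ I, hadd x y ⊆ I) ∧ (∀ x ∈ I, ∀ r : R, mul x r ∈ I)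

/-- A left hyperideal. -/
def IsLeftHyperideal (I : Set R) : Prop :=
  I.Nonempty ∧ (∀ x ∈ I, ∀ y ∈ I, hadd x y ⊆ I) ∧ (∀ x ∈ I, ∀ r : R, mul r x ∈ I)

/-- The product of two subsets:
`AB = {x : x ∈ a₁b₁ ⊕ ⋯ ⊕ aₚbₚ for some p ≥ 1, aᵢ ∈ A, bᵢ ∈ B}`. -/
def setProd (A B : Set R) : Set R :=
  {x | ∃ l : List (R × R), l ≠ [] ∧ (∀ p ∈ l, p.1 ∈ A ∧ p.2 ∈ B) ∧
    x ∈ hsumList (l.map fun p => mul p.1 p.2)}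

/-- `R` is fully idempotent if every hyperideal `I` satisfies `I² = I`. -/
def FullyIdempotent (R : Type*) [Semihyperring R] : Prop :=
  ∀ I : Set R, IsHyperideal I → setProd I I = I

/-- `R` is (von Neumann) regular if every `x` satisfies `x = x·a·x` for some `a`. -/
def Regular (R : Type*) [Semihyperring R] : Prop :=
  ∀ x : R, ∃ a : R, x = mul (mul x a) x

/-- A fuzzy hyperideal of `R`: a function `μ : R → [0,1]` with
`inf {μ z : z ∈ x ⊕ y} ≥ min (μ x) (μ y)` and `μ (x·y) ≥ max (μ x) (μ y)`. -/
def IsFuzzyHyperideal (μ : R → unitInterval) : Prop :=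
  (∀ x y : R, μ x ⊓ μ y ≤ ⨅ z ∈ hadd x y, μ z) ∧
  (∀ x y : R, μ x ⊔ μ y ≤ μ (mul x y))

/-- A fuzzy right hyperideal: `inf {λ z : z ∈ x ⊕ y} ≥ min (λ x) (λ y)` and `λ (x·y) ≥ λ x`. -/
def IsFuzzyRightHyperideal (μ : R → unitInterval) : Prop :=
  (∀ x y : R, μ x ⊓ μ y ≤ ⨅ z ∈ hadd x y, μ z) ∧
  (∀ x y : R, μ x ≤ μ (mul x y))

/-- A fuzzy left hyperideal: `inf {λ z : z ∈ x ⊕ y} ≥ min (λ x) (λ y)` and `λ (x·y) ≥ λ y`. -/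
def IsFuzzyLeftHyperideal (μ : R → unitInterval) : Prop :=
  (∀ x y : R, μ x ⊓ μ y ≤ ⨅ z ∈ hadd x y, μ z) ∧
  (∀ x y : R, μ y ≤ μ (mul x y))

/-- The product `λμ` of fuzzy subsets:
`(λμ)(x) = ⋁ { ⋀_{1≤i≤p} (λ yᵢ ⊓ μ zᵢ) : p ≥ 1, x ∈ y₁z₁ ⊕ ⋯ ⊕ yₚzₚ }`. -/
noncomputable def fprod (lam mu : R → unitInterval) (x : R) : unitInterval :=
  sSup {t | ∃ l : List (R × R), l ≠ [] ∧
    x ∈ hsumList (l.map fun p => mul p.1 p.2) ∧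
    t = ⨅ p ∈ l, lam p.1 ⊓ mu p.2}

/-- The sum `λ ⊕ μ` of fuzzy subsets:
`(λ ⊕ μ)(x) = ⋁ { λ y ⊓ μ z : x ∈ y ⊕ z }`. -/
noncomputable def fsum (lam mu : R → unitInterval) (x : R) : unitInterval :=
  sSup {t | ∃ y z : R, x ∈ hadd y z ∧ t = lam y ⊓ mu z}

/-- The composition `λ ∘ μ` of fuzzy subsets:
`(λ ∘ μ)(x) = ⋁ { λ y ⊓ μ z : x = y·z }` (with `⋁ ∅ = 0`). -/
noncomputable def fcomp (lam mu : R → unitInterval) (x : R) : unitInterval :=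
  sSup {t | ∃ y z : R, x = mul y z ∧ t = lam y ⊓ mu z}

/-- A fuzzy prime hyperideal: a fuzzy hyperideal `η` such that for all fuzzy hyperideals
`λ, μ`, `λμ ≤ η` implies `λ ≤ η` or `μ ≤ η`. -/
def IsFuzzyPrimeHyperideal (η : R → unitInterval) : Prop :=
  IsFuzzyHyperideal η ∧ ∀ lam mu : R → unitInterval, IsFuzzyHyperideal lam →
    IsFuzzyHyperideal mu → fprod lam mu ≤ η → lam ≤ η ∨ mu ≤ η

/-- A fuzzy irreducible hyperideal: a fuzzy hyperideal `η` such that for all fuzzy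
hyperideals `λ, μ`, `min (λ, μ) = η` (pointwise) implies `λ = η` or `μ = η`. -/
def IsFuzzyIrreducibleHyperideal (η : R → unitInterval) : Prop :=
  IsFuzzyHyperideal η ∧ ∀ lam mu : R → unitInterval, IsFuzzyHyperideal lam →
    IsFuzzyHyperideal mu → lam ⊓ mu = η → lam = η ∨ mu = η

/-- `FP R`: the set of proper fuzzy prime hyperideals of `R`
(`η` is proper if it is not the constant function `1`). -/
def FP (R : Type*) [Semihyperring R] : Set (R → unitInterval) :=
  {η | IsFuzzyPrimeHyperideal η ∧ η ≠ fun _ => 1}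

/-- `O λ = {μ ∈ FP R : λ ≰ μ}`. -/
def O (lam : R → unitInterval) : Set (R → unitInterval) :=
  {mu ∈ FP R | ¬ lam ≤ mu}

/-- The sum `Σᵢ ηᵢ` of an arbitrary family of fuzzy subsets:
`(Σᵢ ηᵢ)(x) = ⋁ { ⋀_{1≤k≤p} η_{i_k} (x_k) : p ≥ 1, x ∈ x₁ ⊕ ⋯ ⊕ xₚ }`. -/
noncomputable def famSum {ι : Type*} (η : ι → R → unitInterval) (x : R) : unitInterval :=
  sSup {t | ∃ l : List (ι × R), l ≠ [] ∧ x ∈ hsumList (l.map Prod.snd) ∧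
    t = ⨅ p ∈ l, η p.1 p.2}

end Semihyperring

/-!
Both directions pass through the inequality `λ ≤ λλ` for fuzzy hyperideals, which characterises
full idempotence: `λ` is at least `λ x` on the principal hyperideal `⟨x⟩`, and `x ∈ ⟨x⟩²`; in the
other direction, test the inequality on characteristic functions, for which `χ_I χ_J = χ_{IJ}`.

If `R` is fully idempotent then `λμ = λ ⊓ μ`, and for each `x` Zorn's lemma gives a fuzzy
hyperideal `η ≥ λ` maximal subject to `η x ≤ λ x`. It is prime: if `σθ ≤ η` with `σ, θ ≰ η`, then
by maximality the fuzzy hyperideals generated by `η ⊔ σ` and `η ⊔ θ` both exceed `λ x` at `x`,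
yet their product, which is their meet, lies below `η`. Conversely, every prime above `λλ` lies
above `λ`, so if `λλ` is the infimum of those primes then `λ ≤ λλ`.
-/

namespace List

variable {α β : Type*} [CompleteLattice β]

lemma iInf_mem_cons (f : α → β) (a : α) (l : List α) :
    ⨅ y ∈ a :: l, f y = f a ⊓ ⨅ y ∈ l, f y := by
  simp only [mem_cons, iInf_or, iInf_inf_eq, iInf_iInf_eq_left]

lemma iInf_mem_append (f : α → β) (l m : List α) :
    ⨅ y ∈ l ++ m, f y = (⨅ y ∈ l, f y) ⊓ ⨅ y ∈ m, f y := by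
  simp only [mem_append, iInf_or, iInf_inf_eq]

end List

open Classical in
noncomputable def charFun {α : Type*} (I : Set α) (x : α) : unitInterval := if x ∈ I then ⊤ else ⊥

lemma charFun_le_charFun_iff {α : Type*} {I J : Set α} : charFun I ≤ charFun J ↔ I ⊆ J := by
  refine ⟨fun h x hx => by_contra fun hxJ => ?_, fun h x => ?_⟩
  · simpa [charFun, hx, hxJ] using h x
  · by_cases hx : x ∈ I
    · simp [charFun, hx, h hx]
    · simp [charFun, hx]

namespace Semihyperring

variable {R : Type*} [Semihyperring R]

section Hypersums

lemma mem_haddSet {A B : Set R} {x : R} :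
    x ∈ haddSet A B ↔ ∃ a ∈ A, ∃ b ∈ B, x ∈ hadd a b := by
  simp [haddSet]

lemma haddSet_assoc (A B C : Set R) :
    haddSet (haddSet A B) C = haddSet A (haddSet B C) := by
  ext x
  simp only [mem_haddSet]
  constructor
  · rintro ⟨w, ⟨a, ha, b, hb, hw⟩, c, hc, hx⟩
    have hx' : x ∈ ⋃ v ∈ hadd a b, hadd v c := Set.mem_biUnion hw hx
    obtain ⟨v, hv, hxv⟩ := Set.mem_iUnion₂.1 (hadd_assoc a b c ▸ hx')
    exact ⟨a, ha, v, ⟨b, hb, c, hc, hv⟩, hxv⟩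
  · rintro ⟨a, ha, v, ⟨b, hb, c, hc, hv⟩, hx⟩
    have hx' : x ∈ ⋃ w ∈ hadd b c, hadd a w := Set.mem_biUnion hv hx
    obtain ⟨w, hw, hxw⟩ := Set.mem_iUnion₂.1 (hadd_assoc a b c ▸ hx')
    exact ⟨w, ⟨a, ha, b, hb, hw⟩, c, hc, hxw⟩

lemma mem_hsumList_cons {x a : R} {l : List R} :
    x ∈ hsumList (a :: l) ↔ ∃ w ∈ hsumList l, x ∈ hadd a w := by
  simp [hsumList, haddSet]

@[simp]
lemma hsumList_singleton (a : R) : hsumList [a] = {a} := by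
  simp [hsumList, haddSet, hadd_zero]

lemma hsumList_append (l m : List R) :
    hsumList (l ++ m) = haddSet (hsumList l) (hsumList m) := by
  induction l with
  | nil => ext; simp [hsumList, mem_haddSet, zero_hadd]
  | cons a l ih => rw [List.cons_append, hsumList, ih, hsumList, haddSet_assoc]

lemma mul_mem_hsumList_map_mul_left (r : R) {x : R} {l : List R} (hx : x ∈ hsumList l) :
    mul r x ∈ hsumList (l.map (mul r)) := by
  induction l generalizing x with
  | nil => simp_all [hsumList, mul_zero]
  | cons a l ih =>
    obtain ⟨w, hw, hxw⟩ := mem_hsumList_cons.1 hx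
    exact mem_hsumList_cons.2 ⟨mul r w, ih hw, left_distrib r a w ▸ ⟨x, hxw, rfl⟩⟩

lemma mul_mem_hsumList_map_mul_right (r : R) {x : R} {l : List R} (hx : x ∈ hsumList l) :
    mul x r ∈ hsumList (l.map (mul · r)) := by
  induction l generalizing x with
  | nil => simp_all [hsumList, zero_mul]
  | cons a l ih =>
    obtain ⟨w, hw, hxw⟩ := mem_hsumList_cons.1 hx
    exact mem_hsumList_cons.2 ⟨mul w r, ih hw, right_distrib a w r ▸ ⟨x, hxw, rfl⟩⟩

lemma mul_mem_hsumList_product {y z : R} {l m : List R} (hy : y ∈ hsumList l)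
    (hz : z ∈ hsumList m) : mul y z ∈ hsumList ((l ×ˢ m).map fun p => mul p.1 p.2) := by
  induction l generalizing y with
  | nil => simp_all [hsumList, zero_mul]
  | cons a l ih =>
    obtain ⟨w, hw, hyw⟩ := mem_hsumList_cons.1 hy
    rw [List.product_cons, List.map_append, List.map_map, hsumList_append]
    exact mem_haddSet.2 ⟨mul a z, mul_mem_hsumList_map_mul_left a hz, mul w z, ih hw,
      right_distrib a w z ▸ ⟨y, hyw, rfl⟩⟩

lemma biInf_le_of_mem_hsumList {μ : R → unitInterval}
    (hμ : ∀ x y : R, μ x ⊓ μ y ≤ ⨅ z ∈ hadd x y, μ z) {l : List R} (hl : l ≠ [])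
    {x : R} (hx : x ∈ hsumList l) : ⨅ y ∈ l, μ y ≤ μ x := by
  induction l generalizing x with
  | nil => exact absurd rfl hl
  | cons a l ih =>
    obtain ⟨w, hw, hxw⟩ := mem_hsumList_cons.1 hx
    rw [List.iInf_mem_cons]
    rcases eq_or_ne l [] with rfl | hl'
    · simp_all [hsumList, hadd_zero]
    · exact (inf_le_inf_left _ (ih hl' hw)).trans ((hμ a w).trans (biInf_le _ hxw))

end Hypersums

section FuzzyHyperideals

variable {lam mu nu : R → unitInterval}

lemma IsFuzzyHyperideal.le_mul_left (h : IsFuzzyHyperideal lam) (r y : R) :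
    lam y ≤ lam (mul r y) :=
  le_sup_right.trans (h.2 r y)

lemma IsFuzzyHyperideal.le_mul_right (h : IsFuzzyHyperideal lam) (r y : R) :
    lam y ≤ lam (mul y r) :=
  le_sup_left.trans (h.2 y r)

lemma IsFuzzyHyperideal.inf (hlam : IsFuzzyHyperideal lam) (hmu : IsFuzzyHyperideal mu) :
    IsFuzzyHyperideal (lam ⊓ mu) := by
  refine ⟨fun x y => le_iInf₂ fun z hz => ?_, fun x y => ?_⟩
  · exact le_inf ((inf_le_inf inf_le_left inf_le_left).trans ((hlam.1 x y).trans (biInf_le _ hz)))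
      ((inf_le_inf inf_le_right inf_le_right).trans ((hmu.1 x y).trans (biInf_le _ hz)))
  · exact sup_le (le_inf (inf_le_left.trans (hlam.le_mul_right y x))
        (inf_le_right.trans (hmu.le_mul_right y x)))
      (le_inf (inf_le_left.trans (hlam.le_mul_left x y)) (inf_le_right.trans (hmu.le_mul_left x y)))

lemma isFuzzyHyperideal_biSup_of_isChain {c : Set (R → unitInterval)} (hc : IsChain (· ≤ ·) c)
    (h : ∀ ν ∈ c, IsFuzzyHyperideal ν) : IsFuzzyHyperideal (⨆ ν ∈ c, ν) := by
  simp only [IsFuzzyHyperideal, iSup_apply]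
  refine ⟨fun x y => le_iInf₂ fun z hz => ?_, fun x y => ?_⟩
  · rw [biSup_inf_biSup]
    refine iSup₂_le fun ⟨ν, ν'⟩ ⟨hν, hν'⟩ => ?_
    obtain ⟨κ, hκ, hνκ, hν'κ⟩ := hc.directedOn ν hν ν' hν'
    calc ν x ⊓ ν' y ≤ κ x ⊓ κ y := inf_le_inf (hνκ x) (hν'κ y)
      _ ≤ κ z := ((h κ hκ).1 x y).trans (biInf_le _ hz)
      _ ≤ ⨆ ν ∈ c, ν z := le_iSup₂_of_le κ hκ le_rfl
  · exact sup_le (iSup₂_mono fun ν hν => (h ν hν).le_mul_right y x)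
      (iSup₂_mono fun ν hν => (h ν hν).le_mul_left x y)

lemma inf_le_fprod_mul (lam mu : R → unitInterval) (u v : R) :
    lam u ⊓ mu v ≤ fprod lam mu (mul u v) :=
  le_sSup ⟨[(u, v)], List.cons_ne_nil _ _, by simp, by simp⟩

lemma fprod_le_of_forall (hnu : ∀ x y : R, nu x ⊓ nu y ≤ ⨅ z ∈ hadd x y, nu z)
    (h : ∀ u v : R, lam u ⊓ mu v ≤ nu (mul u v)) : fprod lam mu ≤ nu := fun x =>
  sSup_le fun _ ⟨l, hl, hx, ht⟩ => ht ▸ le_trans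
    (le_iInf₂ fun _ hy => by
      obtain ⟨p, hp, rfl⟩ := List.mem_map.1 hy
      exact (biInf_le (fun p : R × R => lam p.1 ⊓ mu p.2) hp).trans (h p.1 p.2))
    (biInf_le_of_mem_hsumList hnu (by simpa using hl) hx)

lemma fprod_mono {lam' mu' : R → unitInterval} (hlam : lam ≤ lam') (hmu : mu ≤ mu') :
    fprod lam mu ≤ fprod lam' mu' := fun _ =>
  sSup_le fun _ ⟨l, hl, hx, ht⟩ => ht ▸ le_sSup_of_le ⟨l, hl, hx, rfl⟩
    (iInf₂_mono fun p _ => inf_le_inf (hlam p.1) (hmu p.2))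

lemma fprod_le_inf (hlam : IsFuzzyHyperideal lam) (hmu : IsFuzzyHyperideal mu) :
    fprod lam mu ≤ lam ⊓ mu :=
  le_inf (fprod_le_of_forall hlam.1 fun u v => inf_le_left.trans (hlam.le_mul_right v u))
    (fprod_le_of_forall hmu.1 fun u v => inf_le_right.trans (hmu.le_mul_left u v))

lemma IsFuzzyHyperideal.fprod (hlam : IsFuzzyHyperideal lam) (hmu : IsFuzzyHyperideal mu) :
    IsFuzzyHyperideal (fprod lam mu) := by
  refine ⟨fun a b => le_iInf₂ fun z hz => ?_, fun a b => sup_le ?_ ?_⟩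
  · rw [Semihyperring.fprod, Semihyperring.fprod, sSup_inf_sSup]
    refine iSup₂_le ?_
    rintro ⟨t, s⟩ ⟨⟨l, hl, ha, rfl⟩, ⟨m, -, hb, rfl⟩⟩
    have hz' : z ∈ hsumList ((l ++ m).map fun p => mul p.1 p.2) := by
      rw [List.map_append, hsumList_append]
      exact mem_haddSet.2 ⟨a, ha, b, hb, hz⟩
    exact le_sSup_of_le ⟨l ++ m, by simp [hl], hz', rfl⟩ (List.iInf_mem_append _ _ _).ge
  · refine sSup_le fun _ ⟨l, hl, ha, ht⟩ => ht ▸ ?_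
    have hab : mul a b ∈ hsumList ((l.map fun p => (p.1, mul p.2 b)).map fun p => mul p.1 p.2) := by
      simpa [List.map_map, Function.comp_def, mul_assoc] using mul_mem_hsumList_map_mul_right b ha
    refine le_sSup_of_le ⟨_, by simpa using hl, hab, rfl⟩ (le_iInf₂ fun p hp => ?_)
    obtain ⟨q, hq, rfl⟩ := List.mem_map.1 hp
    exact le_trans (biInf_le _ hq) (inf_le_inf le_rfl (hmu.le_mul_right b q.2))
  · refine sSup_le fun _ ⟨l, hl, hb, ht⟩ => ht ▸ ?_
    have hab : mul a b ∈ hsumList ((l.map fun p => (mul a p.1, p.2)).map fun p => mul p.1 p.2) := by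
      simpa [List.map_map, Function.comp_def, mul_assoc] using mul_mem_hsumList_map_mul_left a hb
    refine le_sSup_of_le ⟨_, by simpa using hl, hab, rfl⟩ (le_iInf₂ fun p hp => ?_)
    obtain ⟨q, hq, rfl⟩ := List.mem_map.1 hp
    exact le_trans (biInf_le _ hq) (inf_le_inf (hlam.le_mul_left a q.1) le_rfl)

end FuzzyHyperideals

section FullyIdempotent

inductive MemPrincipalHyperideal (x : R) : R → Prop
  | self : MemPrincipalHyperideal x x
  | hadd {a b c : R} : MemPrincipalHyperideal x a → MemPrincipalHyperideal x b → c ∈ hadd a b →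
      MemPrincipalHyperideal x c
  | mul_left (r : R) {a : R} : MemPrincipalHyperideal x a → MemPrincipalHyperideal x (mul r a)
  | mul_right (r : R) {a : R} : MemPrincipalHyperideal x a → MemPrincipalHyperideal x (mul a r)

lemma isHyperideal_setOf_memPrincipalHyperideal (x : R) :
    IsHyperideal {z | MemPrincipalHyperideal x z} :=
  ⟨⟨x, .self⟩, fun _ ha _ hb _ hc => .hadd ha hb hc,
    fun r _ ha => ⟨.mul_left r ha, .mul_right r ha⟩⟩

lemma IsFuzzyHyperideal.le_of_memPrincipalHyperideal {lam : R → unitInterval}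
    (h : IsFuzzyHyperideal lam) {x z : R} (hz : MemPrincipalHyperideal x z) : lam x ≤ lam z := by
  induction hz with
  | self => exact le_rfl
  | hadd _ _ hc iha ihb => exact (le_inf iha ihb).trans ((h.1 _ _).trans (biInf_le _ hc))
  | mul_left r _ ih => exact ih.trans (h.le_mul_left r _)
  | mul_right r _ ih => exact ih.trans (h.le_mul_right r _)

lemma IsHyperideal.isFuzzyHyperideal_charFun {I : Set R} (hI : IsHyperideal I) :
    IsFuzzyHyperideal (charFun I) := by
  refine ⟨fun x y => ?_, fun x y => ?_⟩
  · by_cases hxy : x ∈ I ∧ y ∈ I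
    · exact le_iInf₂ fun z hz => by simp [charFun, hI.2.1 x hxy.1 y hxy.2 hz]
    · rw [not_and_or] at hxy
      rcases hxy with hx | hy <;> simp [charFun, *]
  · by_cases hxy : x ∈ I ∨ y ∈ I
    · have hmul : mul x y ∈ I :=
        hxy.elim (fun hx => (hI.2.2 y x hx).2) (fun hy => (hI.2.2 x y hy).1)
      simp [charFun, hmul]
    · rw [not_or] at hxy
      simp [charFun, hxy.1, hxy.2]

lemma fprod_charFun (I J : Set R) : fprod (charFun I) (charFun J) = charFun (setProd I J) := by
  ext x : 1
  by_cases hx : x ∈ setProd I J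
  · obtain ⟨l, hl, hmem, hxl⟩ := id hx
    rw [charFun, if_pos hx]
    refine le_antisymm le_top (le_sSup_of_le ⟨l, hl, hxl, rfl⟩ (le_iInf₂ fun p hp => ?_))
    simp [charFun, (hmem p hp).1, (hmem p hp).2]
  · rw [charFun, if_neg hx]
    refine le_antisymm (sSup_le fun _ ⟨l, hl, hxl, ht⟩ => ht ▸ ?_) bot_le
    have hbad : ∃ p ∈ l, ¬ (p.1 ∈ I ∧ p.2 ∈ J) := by
      by_contra! hall
      exact hx ⟨l, hl, hall, hxl⟩
    obtain ⟨p, hp, hpIJ⟩ := hbad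
    refine le_trans (biInf_le _ hp) ?_
    rw [not_and_or] at hpIJ
    rcases hpIJ with h | h <;> simp [charFun, h]

theorem fullyIdempotent_iff_forall_le_fprod_self :
    FullyIdempotent R ↔ ∀ lam : R → unitInterval, IsFuzzyHyperideal lam → lam ≤ fprod lam lam := by
  refine ⟨fun hF lam hlam x => ?_, fun h I hI => ?_⟩
  · obtain ⟨l, hl, hmem, hxl⟩ :
        x ∈ setProd {z | MemPrincipalHyperideal x z} {z | MemPrincipalHyperideal x z} := by
      rw [hF _ (isHyperideal_setOf_memPrincipalHyperideal x)]
      exact .self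
    exact le_sSup_of_le ⟨l, hl, hxl, rfl⟩ (le_iInf₂ fun p hp =>
      le_inf (hlam.le_of_memPrincipalHyperideal (hmem p hp).1)
        (hlam.le_of_memPrincipalHyperideal (hmem p hp).2))
  · have hχ := hI.isFuzzyHyperideal_charFun
    refine charFun_le_charFun_iff.1 ?_ |>.antisymm (charFun_le_charFun_iff.1 ?_)
    · exact fprod_charFun I I ▸ (fprod_le_inf hχ hχ).trans inf_le_left
    · exact fprod_charFun I I ▸ h _ hχ

lemma fprod_eq_inf (hF : FullyIdempotent R) {lam mu : R → unitInterval}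
    (hlam : IsFuzzyHyperideal lam) (hmu : IsFuzzyHyperideal mu) : fprod lam mu = lam ⊓ mu :=
  (fprod_le_inf hlam hmu).antisymm <|
    (fullyIdempotent_iff_forall_le_fprod_self.1 hF _ (hlam.inf hmu)).trans
      (fprod_mono inf_le_left inf_le_right)

end FullyIdempotent

section PrimeHyperideals

variable {f g η σ θ : R → unitInterval}

noncomputable def hsumClosure (f : R → unitInterval) (x : R) : unitInterval :=
  sSup {t | ∃ l : List R, l ≠ [] ∧ x ∈ hsumList l ∧ t = ⨅ y ∈ l, f y}

lemma le_hsumClosure (f : R → unitInterval) : f ≤ hsumClosure f := fun x =>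
  le_sSup ⟨[x], List.cons_ne_nil _ _, by simp, by simp⟩

lemma isFuzzyHyperideal_hsumClosure (hf : ∀ x y : R, f x ⊔ f y ≤ f (mul x y)) :
    IsFuzzyHyperideal (hsumClosure f) := by
  refine ⟨fun x y => le_iInf₂ fun z hz => ?_, fun x y => sup_le ?_ ?_⟩
  · rw [hsumClosure, hsumClosure, sSup_inf_sSup]
    refine iSup₂_le ?_
    rintro ⟨t, s⟩ ⟨⟨l, hl, hx, rfl⟩, ⟨m, -, hy, rfl⟩⟩
    have hz' : z ∈ hsumList (l ++ m) := hsumList_append l m ▸ mem_haddSet.2 ⟨x, hx, y, hy, hz⟩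
    exact le_sSup_of_le ⟨l ++ m, by simp [hl], hz', rfl⟩ (List.iInf_mem_append _ _ _).ge
  · refine sSup_le fun _ ⟨l, hl, hx, ht⟩ => ht ▸ le_sSup_of_le
      ⟨l.map (mul · y), by simpa using hl, mul_mem_hsumList_map_mul_right y hx, rfl⟩
      (le_iInf₂ fun w hw => ?_)
    obtain ⟨u, hu, rfl⟩ := List.mem_map.1 hw
    exact le_trans (biInf_le _ hu) (le_sup_left.trans (hf u y))
  · refine sSup_le fun _ ⟨l, hl, hy, ht⟩ => ht ▸ le_sSup_of_le
      ⟨l.map (mul x), by simpa using hl, mul_mem_hsumList_map_mul_left x hy, rfl⟩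
      (le_iInf₂ fun w hw => ?_)
    obtain ⟨u, hu, rfl⟩ := List.mem_map.1 hw
    exact le_trans (biInf_le _ hu) (le_sup_right.trans (hf x u))

lemma hsumClosure_inf_hsumClosure_le (hη : ∀ x y : R, η x ⊓ η y ≤ ⨅ z ∈ hadd x y, η z)
    (h : ∀ u v : R, f u ⊓ g v ≤ η (mul u v)) (u v : R) :
    hsumClosure f u ⊓ hsumClosure g v ≤ η (mul u v) := by
  rw [hsumClosure, hsumClosure, sSup_inf_sSup]
  refine iSup₂_le ?_
  rintro ⟨t, s⟩ ⟨⟨l, hl, hu, rfl⟩, ⟨m, hm, hv, rfl⟩⟩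
  obtain ⟨a, ha⟩ := List.exists_mem_of_ne_nil l hl
  obtain ⟨b, hb⟩ := List.exists_mem_of_ne_nil m hm
  have hlm : (l ×ˢ m).map (fun p => mul p.1 p.2) ≠ [] := by
    simpa using List.ne_nil_of_mem (List.mem_product.2 ⟨ha, hb⟩)
  refine le_trans (le_iInf₂ fun w hw => ?_)
    (biInf_le_of_mem_hsumList hη hlm (mul_mem_hsumList_product hu hv))
  obtain ⟨⟨p, q⟩, hpq, rfl⟩ := List.mem_map.1 hw
  obtain ⟨hp, hq⟩ := List.mem_product.1 hpq
  exact le_trans (inf_le_inf (biInf_le _ hp) (biInf_le _ hq)) (h p q)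

lemma sup_inf_sup_le_mul (hη : IsFuzzyHyperideal η) (h : fprod σ θ ≤ η) (u v : R) :
    (η ⊔ σ) u ⊓ (η ⊔ θ) v ≤ η (mul u v) := by
  simp only [Pi.sup_apply, inf_sup_left, inf_sup_right, sup_le_iff]
  exact ⟨⟨inf_le_left.trans (hη.le_mul_right v u), inf_le_right.trans (hη.le_mul_left u v)⟩,
    inf_le_left.trans (hη.le_mul_right v u), (inf_le_fprod_mul σ θ u v).trans (h _)⟩

lemma isFuzzyHyperideal_hsumClosure_sup (hη : IsFuzzyHyperideal η)
    (hσ : IsFuzzyHyperideal σ) : IsFuzzyHyperideal (hsumClosure (η ⊔ σ)) :=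
  isFuzzyHyperideal_hsumClosure fun x y =>
    (sup_sup_sup_comm _ _ _ _).trans_le (sup_le_sup (hη.2 x y) (hσ.2 x y))

lemma isFuzzyPrimeHyperideal_of_maximal (hF : FullyIdempotent R) {lam : R → unitInterval} {x : R}
    (hmax : Maximal (fun ν => IsFuzzyHyperideal ν ∧ lam ≤ ν ∧ ν x ≤ lam x) η) :
    IsFuzzyPrimeHyperideal η := by
  obtain ⟨⟨hη, hlam, hx⟩, hmax⟩ := hmax
  refine ⟨hη, fun σ θ hσ hθ hst => ?_⟩
  have lt_closure_of_not_le :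
      ∀ τ, IsFuzzyHyperideal τ → ¬ τ ≤ η → lam x < hsumClosure (η ⊔ τ) x := by
    intro τ hτ hτη
    have hη_le : η ≤ hsumClosure (η ⊔ τ) := le_sup_left.trans (le_hsumClosure _)
    by_contra! hle
    exact hτη (le_sup_right.trans <| (le_hsumClosure _).trans <|
      hmax ⟨isFuzzyHyperideal_hsumClosure_sup hη hτ, hlam.trans hη_le, hle⟩ hη_le)
  by_contra! hne
  have hprod : hsumClosure (η ⊔ σ) ⊓ hsumClosure (η ⊔ θ) ≤ η := by
    rw [← fprod_eq_inf hF (isFuzzyHyperideal_hsumClosure_sup hη hσ)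
      (isFuzzyHyperideal_hsumClosure_sup hη hθ)]
    exact fprod_le_of_forall hη.1
      (hsumClosure_inf_hsumClosure_le hη.1 (sup_inf_sup_le_mul hη hst))
  exact (lt_inf_iff.2 ⟨lt_closure_of_not_le σ hσ hne.1, lt_closure_of_not_le θ hθ hne.2⟩).not_ge
    ((hprod x).trans hx)

lemma exists_isFuzzyPrimeHyperideal_le (hF : FullyIdempotent R) {lam : R → unitInterval}
    (hlam : IsFuzzyHyperideal lam) (x : R) :
    ∃ η, IsFuzzyPrimeHyperideal η ∧ lam ≤ η ∧ η x ≤ lam x := by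
  obtain ⟨η, -, hmax⟩ := zorn_le_nonempty₀ {ν | IsFuzzyHyperideal ν ∧ lam ≤ ν ∧ ν x ≤ lam x}
    (fun c hc hchain ν hν => ⟨⨆ κ ∈ c, κ,
      ⟨isFuzzyHyperideal_biSup_of_isChain hchain fun κ hκ => (hc hκ).1,
        (hc hν).2.1.trans (le_iSup₂_of_le ν hν le_rfl),
        by simpa only [iSup_apply] using iSup₂_le fun κ hκ => (hc hκ).2.2⟩,
      fun κ hκ => le_iSup₂_of_le κ hκ le_rfl⟩)
    lam ⟨hlam, le_rfl, le_rfl⟩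
  exact ⟨η, isFuzzyPrimeHyperideal_of_maximal hF hmax, hmax.1.2.1, hmax.1.2.2⟩

lemma le_fprod_self_of_eq_sInf {lam : R → unitInterval} (hlam : IsFuzzyHyperideal lam)
    (h : ∀ x, fprod lam lam x = sInf {t | ∃ η : R → unitInterval,
      IsFuzzyPrimeHyperideal η ∧ fprod lam lam ≤ η ∧ t = η x}) :
    lam ≤ fprod lam lam := fun x =>
  (h x).symm ▸ le_sInf fun _ ⟨_, hη, hle, ht⟩ =>
    ht ▸ (hη.2 lam lam hlam hlam hle).elim (· x) (· x)

end PrimeHyperideals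

end Semihyperring

open Semihyperring in
/-- `R` is fully idempotent iff every fuzzy hyperideal `λ` of `R` is the
pointwise infimum of the fuzzy prime hyperideals of `R` containing it. -/
theorem fullyIdempotent_iff_inf_of_primes (R : Type*) [Semihyperring R] :
    FullyIdempotent R ↔
      ∀ lam : R → unitInterval, IsFuzzyHyperideal lam → ∀ x : R,
        lam x = sInf {t | ∃ η : R → unitInterval,
          IsFuzzyPrimeHyperideal η ∧ lam ≤ η ∧ t = η x} := by
  refine ⟨fun hF lam hlam x => le_antisymm ?_ ?_, fun h => ?_⟩
  · exact le_sInf fun _ ⟨_, _, hle, ht⟩ => ht ▸ hle x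
  · obtain ⟨η, hη, hle, hx⟩ := exists_isFuzzyPrimeHyperideal_le hF hlam x
    exact le_trans (sInf_le ⟨η, hη, hle, rfl⟩) hx
  · exact fullyIdempotent_iff_forall_le_fprod_self.2 fun lam hlam =>
      le_fprod_self_of_eq_sInf hlam (h _ (hlam.fprod hlam))
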